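/- arXiv:1405.4317 — 3 statements merged into one kernel-verified Lean document; each statement's English description precedes it below -/
import Mathlib

section
/- Every r-leap catalecticant matrix C of size v×w with v ≥ w whose entries are the variables X_{(i-1)r+j} is 1-generic, i.e., for all nonzero row vectors a ∈ k^v and nonzero column vectors b ∈ k^w, the linear form a·C·b is nonzero. -/
open MvPolynomial

noncomputable section

/-- The height of an ideal: infimum of heights of primes containing it. -/
def idealHeight {R : Type*} [CommRing R] (I : Ideal R) : ℕ∞ :=
  ⨅ (P : PrimeSpectrum R) (_ : I ≤ P.asIdeal), Order.height P

/-- The ideal generated by the `t × t` minors of a matrix. -/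
def minorsIdeal {R : Type*} [CommRing R] {v w : ℕ} (M : Matrix (Fin v) (Fin w) R)
    (t : ℕ) : Ideal R :=
  Ideal.span { d | ∃ (ri : Fin t → Fin v) (ci : Fin t → Fin w),
    Function.Injective ri ∧ Function.Injective ci ∧ d = (M.submatrix ri ci).det }

/-- The increasing enumeration of `{0, ..., v-1} \ {p}`. -/
def deleteRow {v : ℕ} (p : ℕ) (i : Fin (v - 1)) : Fin v :=
  if h : i.1 < p then ⟨i.1, by omega⟩ else ⟨i.1 + 1, by omega⟩

/-- The signed maximal minors of a `v × (v-1)` matrix. -/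
def signedMinors {R : Type*} [CommRing R] {v : ℕ} (M : Matrix (Fin v) (Fin (v - 1)) R) :
    Fin v → R :=
  fun i => (-1 : R) ^ i.1 * (M.submatrix (deleteRow i.1) id).det

/-- A matrix of linear forms is `1`-generic if every "bilinear combination" of its entries
with nonzero coefficient vectors over `k` is nonzero. -/
def IsOneGeneric {k : Type*} [Field k] {σ : Type*} {v w : ℕ}
    (M : Matrix (Fin v) (Fin w) (MvPolynomial σ k)) : Prop :=
  ∀ a : Fin v → k, a ≠ 0 → ∀ b : Fin w → k, b ≠ 0 →
    (∑ i, ∑ j, C (a i) * M i j * C (b j)) ≠ 0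

/-- The kernel of the presentation `R[T_1,...,T_p] → R[It]`, `T_i ↦ g_i t`, of the Rees
algebra of the ideal generated by `g`. -/
def presentationKer {R : Type*} [CommRing R] {p : ℕ} (g : Fin p → R) :
    Ideal (MvPolynomial (Fin p) R) :=
  RingHom.ker ((MvPolynomial.aeval (R := R)
    (fun i => Polynomial.C (g i) * Polynomial.X)).toRingHom)

/-- The ideal generated by `g` is of linear type (w.r.t. the generators `g`):
the defining ideal of its Rees algebra is generated in degree one, which amounts to
`Sym(I) → R[It]` being an isomorphism. -/
def IsLinearTypeGen {R : Type*} [CommRing R] {p : ℕ} (g : Fin p → R) : Prop :=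
  presentationKer g =
    Ideal.span { q | q ∈ presentationKer g ∧ q.IsHomogeneous 1 }

/-- The `s`-th symbolic power of `I`, as the contraction of `U⁻¹Iˢ` where `U` is the
complement of the union of the associated primes of `R/I`. -/
def symbolicPower {R : Type*} [CommRing R] (I : Ideal R) (s : ℕ) : Set R :=
  { x | ∃ u : R, (∀ P ∈ associatedPrimes R (R ⧸ I), u ∉ P) ∧ u * x ∈ I ^ s }

/-- A (Noetherian) local ring is Cohen–Macaulay if it admits a regular sequence in the
maximal ideal whose length is the Krull dimension. -/
def IsCMLocalRing (A : Type*) [CommRing A] [IsLocalRing A] : Prop :=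
  ∃ rs : List A, (∀ x ∈ rs, x ∈ IsLocalRing.maximalIdeal A) ∧
    RingTheory.Sequence.IsRegular A rs ∧ (rs.length : WithBot ℕ∞) = ringKrullDim A

/-- A ring is Cohen–Macaulay if all its localizations at primes are Cohen–Macaulay. -/
def IsCMRing (A : Type*) [CommRing A] : Prop :=
  ∀ (P : Ideal A) [P.IsPrime], IsCMLocalRing (Localization.AtPrime P)

/-- A Noetherian local ring is regular if its maximal ideal is generated by
(Krull dimension)-many elements. -/
def IsRegularLocalRing' (A : Type*) [CommRing A] [IsLocalRing A] : Prop :=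
  IsNoetherianRing A ∧ ∃ s : Finset A,
    Ideal.span (s : Set A) = IsLocalRing.maximalIdeal A ∧
    (s.card : WithBot ℕ∞) = ringKrullDim A

/-- The forms `g : Fin n → k[X_1,...,X_n]` define a Cremona (birational) map of `ℙ^{n-1}`:
there are forms `f` of a common degree and nonzero "inversion factors" `D`, `D'` with
`f_i(g) = X_i · D` and `g_i(f) = X_i · D'`. -/
def IsCremona {k : Type*} [Field k] {n : ℕ} (g : Fin n → MvPolynomial (Fin n) k) : Prop :=
  ∃ (d : ℕ) (f : Fin n → MvPolynomial (Fin n) k) (D D' : MvPolynomial (Fin n) k),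
    (∀ i, (f i).IsHomogeneous d) ∧ D ≠ 0 ∧ D' ≠ 0 ∧
    (∀ i, MvPolynomial.aeval g (f i) = X i * D) ∧
    (∀ i, MvPolynomial.aeval f (g i) = X i * D')

/-- The analytic spread of `I` at the prime `P`: the dimension of the special fiber
of the Rees algebra of `I_P` over `R_P`. -/
def analyticSpreadAt {R : Type*} [CommRing R] (I : Ideal R) (P : Ideal R) [P.IsPrime] :
    WithBot ℕ∞ :=
  ringKrullDim ((reesAlgebra (I.map (algebraMap R (Localization.AtPrime P)))) ⧸
    (Ideal.span ((algebraMap (Localization.AtPrime P)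
        (reesAlgebra (I.map (algebraMap R (Localization.AtPrime P))))) ''
      ((IsLocalRing.maximalIdeal (Localization.AtPrime P) : Ideal _) : Set _))))

/-- The `m × (m-1)` `r`-leap catalecticant matrix in `(m-1)(r+1)` variables. -/
def catMatrix (k : Type*) [CommSemiring k] (m r : ℕ) :
    Matrix (Fin m) (Fin (m - 1)) (MvPolynomial (Fin ((m - 1) * (r + 1))) k) :=
  fun i j => X ⟨i.1 * r + j.1, by
    have h1 := i.isLt; have h2 := j.isLt
    have h3 : i.1 ≤ m - 1 := by omega
    calc i.1 * r + j.1 < i.1 * r + (m - 1) := by omega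
      _ ≤ (m - 1) * r + (m - 1) := Nat.add_le_add_right (Nat.mul_le_mul_right r h3) _
      _ = (m - 1) * (r + 1) := by ring⟩

/-- The `v × w` `r`-leap catalecticant matrix in `(v-1)r + w` variables. -/
def catMatrixVW (k : Type*) [CommSemiring k] (v w r : ℕ) :
    Matrix (Fin v) (Fin w) (MvPolynomial (Fin ((v - 1) * r + w)) k) :=
  fun i j => X ⟨i.1 * r + j.1, by
    have h1 := i.isLt; have h2 := j.isLt
    have h3 : i.1 ≤ v - 1 := by omega
    calc i.1 * r + j.1 ≤ (v - 1) * r + j.1 :=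
          Nat.add_le_add_right (Nat.mul_le_mul_right r h3) _
      _ < (v - 1) * r + w := by omega⟩

/-- The generic `v × w` Hankel matrix in `v + w - 1` variables. -/
def hankelMatrix (k : Type*) [CommSemiring k] (v w : ℕ) :
    Matrix (Fin v) (Fin w) (MvPolynomial (Fin (v + w - 1)) k) :=
  fun i j => X ⟨i.1 + j.1, by omega⟩

/-- The `m × (m-1)` sub-Hankel matrix in `n` variables: the generic Hankel matrix with the
variables of index `> n` replaced by `0`. -/
def subHankel (k : Type*) [CommSemiring k] (m n : ℕ) :
    Matrix (Fin m) (Fin (m - 1)) (MvPolynomial (Fin n) k) :=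
  fun i j => if h : i.1 + j.1 < n then X ⟨i.1 + j.1, h⟩ else 0

/-- The `m × (m-1)` semi-Hankel matrix in `n` variables: the generic Hankel matrix with the
variables of index `> n` replaced by the linear forms `ℓ`. -/
def semiHankel (k : Type*) [CommSemiring k] (m n : ℕ)
    (l : Fin (2 * (m - 1) - n) → MvPolynomial (Fin n) k) :
    Matrix (Fin m) (Fin (m - 1)) (MvPolynomial (Fin n) k) :=
  fun i j => if h : i.1 + j.1 < n then X ⟨i.1 + j.1, h⟩ else l ⟨i.1 + j.1 - n, by omega⟩

lemma exists_top {k : Type*} [Field k] {v : ℕ} (a : Fin v → k) (ha : a ≠ 0) :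
    ∃ i0, a i0 ≠ 0 ∧ ∀ i, i0 < i → a i = 0 := by
  classical
  have hne : (Finset.univ.filter fun i => a i ≠ 0).Nonempty := by
    rw [Finset.filter_nonempty_iff]
    simpa [funext_iff] using Function.ne_iff.mp ha
  refine ⟨(Finset.univ.filter fun i => a i ≠ 0).max' hne, ?_, ?_⟩
  · have := Finset.max'_mem (Finset.univ.filter fun i => a i ≠ 0) hne
    simpa using this
  · intro i hi
    by_contra hai
    have := Finset.le_max' (Finset.univ.filter fun i => a i ≠ 0) i (by simpa using hai)
    exact absurd this (not_le.mpr hi)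

theorem catalecticant_is_one_generic
    (k : Type*) [Field k] [Infinite k] (v w r : ℕ)
    (hr : 1 ≤ r) (hw : 1 ≤ w) (hvw : w ≤ v) :
    IsOneGeneric (catMatrixVW k v w r) := by
  classical
  intro a ha b hb hzero
  obtain ⟨i0, hi0, hi0m⟩ := exists_top a ha
  obtain ⟨j0, hj0, hj0m⟩ := exists_top b hb
  have hlt : i0.1 * r + j0.1 < (v - 1) * r + w := by
    have h1 := i0.isLt; have h2 := j0.isLt
    have h3 : i0.1 ≤ v - 1 := by omega
    calc i0.1 * r + j0.1 ≤ (v - 1) * r + j0.1 :=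
          Nat.add_le_add_right (Nat.mul_le_mul_right r h3) _
      _ < (v - 1) * r + w := by omega
  set n : Fin ((v - 1) * r + w) := ⟨i0.1 * r + j0.1, hlt⟩ with hn
  have hc := congrArg (coeff (Finsupp.single n 1)) hzero
  simp only [coeff_sum, coeff_zero] at hc
  have hterm : ∀ (i : Fin v) (j : Fin w),
      coeff (Finsupp.single n 1) (C (a i) * catMatrixVW k v w r i j * C (b j))
        = if i = i0 ∧ j = j0 then a i0 * b j0 else 0 := by
    intro i j
    have : C (a i) * catMatrixVW k v w r i j * C (b j)
        = C (a i * b j) * catMatrixVW k v w r i j := by rw [C_mul]; ring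
    rw [this, coeff_C_mul, catMatrixVW, coeff_X']
    by_cases hij : i = i0 ∧ j = j0
    · obtain ⟨h1, h2⟩ := hij
      subst h1; subst h2
      simp [hn]
    · rw [if_neg hij]
      by_cases heq : (Finsupp.single (⟨i.1 * r + j.1, by
          have h1 := i.isLt; have h2 := j.isLt
          have h3 : i.1 ≤ v - 1 := by omega
          calc i.1 * r + j.1 ≤ (v - 1) * r + j.1 :=
                Nat.add_le_add_right (Nat.mul_le_mul_right r h3) _
            _ < (v - 1) * r + w := by omega⟩ : Fin ((v - 1) * r + w)) 1)
          = Finsupp.single n 1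
      · rw [if_pos heq, mul_one]
        have hval : i.1 * r + j.1 = i0.1 * r + j0.1 := by
          have h5 := Finsupp.single_left_injective (by norm_num : (1:ℕ) ≠ 0) heq
          simpa [hn] using congrArg Fin.val h5
        rcases lt_trichotomy i.1 i0.1 with h | h | h
        · -- j > j0
          have : j0.1 < j.1 := by
            have := j0.isLt
            nlinarith
          have : b j = 0 := hj0m j (by exact this)
          simp [this]
        · have hii : i = i0 := Fin.ext h
          have h4 : i.1 * r = i0.1 * r := by rw [h]
          have hjj : j = j0 := Fin.ext (by omega)
          exact absurd ⟨hii, hjj⟩ hij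
        · have : a i = 0 := hi0m i (by exact h)
          simp [this]
      · rw [if_neg heq, mul_zero]
  simp only [hterm] at hc
  rw [Finset.sum_eq_single i0] at hc
  · rw [Finset.sum_eq_single j0] at hc
    · rw [if_pos ⟨rfl, rfl⟩] at hc
      exact mul_ne_zero hi0 hj0 hc
    · intro j _ hj; simp [hj]
    · intro h; exact absurd (Finset.mem_univ j0) h
  · intro i _ hi; simp [hi]
  · intro h; exact absurd (Finset.mem_univ i0) h
end
end

section
/- A generic Hankel matrix of size v×w (v ≥ w ≥ 1) with (i,j) entry X_{i+j-1} in the polynomial ring k[X_1,...,X_{v+w-1}] is 1-generic: for every nonzero a ∈ k^v and nonzero b ∈ k^w, the linear form aᵀ H b is nonzero. -/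
/-! Substituting `X_s ↦ t^s` sends the Hankel entry `X_{i+j}` to `t^i t^j`, hence the form
`aᵀ H b` to the product `a(t) b(t)` of the polynomials with coefficient vectors `a` and `b`,
which is nonzero since `k[t]` is a domain. -/

open MvPolynomial

noncomputable section

theorem Polynomial.coeff_sum_fin_C_mul_X_pow {R : Type*} [Semiring R] {n : ℕ}
    (a : Fin n → R) (i : Fin n) :
    (∑ j : Fin n, Polynomial.C (a j) * Polynomial.X ^ (j : ℕ)).coeff i = a i := by
  simp only [Polynomial.finsetSum_coeff, Polynomial.coeff_C_mul_X_pow]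
  rw [Finset.sum_eq_single i (fun j _ hji => if_neg (Fin.val_injective.ne hji).symm)
    (by simp)]
  exact if_pos rfl

theorem Polynomial.sum_fin_C_mul_X_pow_ne_zero {R : Type*} [Semiring R] {n : ℕ}
    {a : Fin n → R} (ha : a ≠ 0) :
    (∑ j : Fin n, Polynomial.C (a j) * Polynomial.X ^ (j : ℕ)) ≠ 0 := by
  obtain ⟨i, hi⟩ := Function.ne_iff.mp ha
  intro h
  apply hi
  rw [← Polynomial.coeff_sum_fin_C_mul_X_pow a i, h, Polynomial.coeff_zero, Pi.zero_apply]

theorem aeval_X_pow_hankel_bilinear {k : Type*} [CommSemiring k] {v w : ℕ}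
    (a : Fin v → k) (b : Fin w → k) :
    aeval (fun s : Fin (v + w - 1) => (Polynomial.X : Polynomial k) ^ (s : ℕ))
        (∑ i, ∑ j, C (a i) * hankelMatrix k v w i j * C (b j)) =
      (∑ i : Fin v, Polynomial.C (a i) * Polynomial.X ^ (i : ℕ)) *
        ∑ j : Fin w, Polynomial.C (b j) * Polynomial.X ^ (j : ℕ) := by
  simp only [map_sum, map_mul, aeval_C, aeval_X, hankelMatrix, Polynomial.algebraMap_eq,
    Finset.sum_mul_sum, pow_add]
  refine Finset.sum_congr rfl fun i _ => Finset.sum_congr rfl fun j _ => ?_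
  ring

theorem hankel_is_one_generic_general
    (k : Type*) [Field k] (v w : ℕ) :
    IsOneGeneric (hankelMatrix k v w) := by
  intro a ha b hb h
  have hprod := aeval_X_pow_hankel_bilinear a b
  rw [h, map_zero] at hprod
  exact mul_ne_zero (Polynomial.sum_fin_C_mul_X_pow_ne_zero ha)
    (Polynomial.sum_fin_C_mul_X_pow_ne_zero hb) hprod.symm

theorem hankel_is_one_generic
    (k : Type*) [Field k] [Infinite k] (v w : ℕ) (hw : 1 ≤ w) (hvw : w ≤ v) :
    IsOneGeneric (hankelMatrix k v w) :=
  hankel_is_one_generic_general k v w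
end
end

section
/- Let Δ be the lower-rightmost t×t minor of the m×(m-1) r-leap catalecticant C and let [C]_t be the submatrix of the first t columns of C. Then for 2 ≤ t ≤ m-2, Δ does not belong to the ideal I_t([C]_t), because Δ has a monomial term involving the last variable X_{(m-1)r+(m-1)} while no t-minor of [C]_t involves it. -/
open MvPolynomial

noncomputable section

/-!
Let `X_N` be the last variable, the lower-right entry of both `C` and `Δ`. Each `t`-minor of
`[C]_t` is a combination of degree-`t` monomials free of `X_N`, so `I_t([C]_t)` lies in the
monomial ideal they generate, and no element of that ideal has a degree-`t` monomial involving
`X_N`. The diagonal monomial of `Δ` involves `X_N`, and its coefficient is `1` because no other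
term of the Leibniz expansion produces it: weighting `X_x` by `x²`, the `τ`-term of `Δ` has
weight `∑ᵢ (c + τ(i) r + i)²`, which is maximal only at `τ = 1`.
-/

namespace CatalecticantMinor

open Finset

section Exponents

variable {σ : Type*} {t : ℕ}

def permExponent (v : Fin t → Fin t → σ) (τ : Equiv.Perm (Fin t)) : σ →₀ ℕ :=
  ∑ i, Finsupp.single (v (τ i) i) 1

lemma degree_permExponent (v : Fin t → Fin t → σ) (τ : Equiv.Perm (Fin t)) :
    (permExponent v τ).degree = t := by
  simp [permExponent, Finsupp.degree_single]

lemma permExponent_apply_eq_zero_iff [DecidableEq σ] (v : Fin t → Fin t → σ)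
    (τ : Equiv.Perm (Fin t)) (a : σ) :
    permExponent v τ a = 0 ↔ ∀ i, v (τ i) i ≠ a := by
  simp [permExponent, Finsupp.finsetSum_apply, Finsupp.single_apply]

lemma weight_permExponent (w : σ → ℕ) (v : Fin t → Fin t → σ) (τ : Equiv.Perm (Fin t)) :
    Finsupp.weight w (permExponent v τ) = ∑ i, w (v (τ i) i) := by
  simp [permExponent, Finsupp.weight_single]

/-- `(c + a r + b)² + r (a - b)²` splits as `f a + g b`, and `∑ f (τ i)` does not depend
on `τ`. -/
lemma perm_eq_one_of_sum_sq_eq (c r : ℕ) (hr : 0 < r) (τ : Equiv.Perm (Fin t))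
    (h : ∑ i, (c + τ i * r + i) ^ 2 = ∑ i : Fin t, (c + i * r + i) ^ 2) : τ = 1 := by
  have hF := Equiv.sum_comp τ fun a : Fin t => (2 * c * r * a + (r ^ 2 + r) * a ^ 2 : ℤ)
  have hsplit : ∑ i, ((((c + τ i * r + i) ^ 2 : ℕ) : ℤ) + r * ((τ i : ℤ) - i) ^ 2) =
      ∑ i : Fin t, (((c + i * r + i) ^ 2 : ℕ) : ℤ) := by
    calc _ = ∑ i, ((2 * c * r * (τ i : ℤ) + (r ^ 2 + r) * (τ i : ℤ) ^ 2) +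
          (c ^ 2 + 2 * c * i + (r + 1) * (i : ℤ) ^ 2)) :=
          sum_congr rfl fun i _ => by push_cast; ring
      _ = _ := by
        rw [sum_add_distrib, hF, ← sum_add_distrib]
        exact sum_congr rfl fun i _ => by push_cast; ring
  rw [sum_add_distrib, ← Nat.cast_sum, ← Nat.cast_sum, h, add_eq_left,
    sum_eq_zero_iff_of_nonneg fun i _ => by positivity] at hsplit
  refine Equiv.ext fun i => Fin.ext ?_
  have hi := hsplit i (mem_univ i)
  simp only [mul_eq_zero, Nat.cast_eq_zero, hr.ne', false_or, pow_eq_zero_iff two_ne_zero,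
    sub_eq_zero] at hi
  exact_mod_cast hi

lemma permExponent_eq_permExponent_one_iff (ι : σ → ℕ) (c r : ℕ) (hr : 0 < r)
    (v : Fin t → Fin t → σ) (hv : ∀ a b, ι (v a b) = c + a * r + b)
    (τ : Equiv.Perm (Fin t)) :
    permExponent v τ = permExponent v 1 ↔ τ = 1 := by
  refine ⟨fun h => perm_eq_one_of_sum_sq_eq c r hr τ ?_, fun h => h ▸ rfl⟩
  simpa [weight_permExponent, hv] using congrArg (Finsupp.weight fun x => ι x ^ 2) h

end Exponents

section Determinant

variable {σ R : Type*} [CommRing R] {t : ℕ}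

lemma det_of_X (v : Fin t → Fin t → σ) :
    (Matrix.of fun i j => (X (v i j) : MvPolynomial σ R)).det =
      ∑ τ, monomial (permExponent v τ) ((Equiv.Perm.sign τ : ℤ) : R) := by
  simp only [Matrix.det_apply, Matrix.of_apply, permExponent, X]
  refine sum_congr rfl fun τ _ => ?_
  rw [← monomial_sum_one, Units.smul_def, zsmul_eq_mul,
    ← map_intCast (C : R →+* MvPolynomial σ R), C_mul_monomial, mul_one]

lemma coeff_det_of_X [DecidableEq σ] (v : Fin t → Fin t → σ) (e : σ →₀ ℕ) :
    coeff e (Matrix.of fun i j => (X (v i j) : MvPolynomial σ R)).det =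
      ∑ τ, if permExponent v τ = e then ((Equiv.Perm.sign τ : ℤ) : R) else 0 := by
  simp only [det_of_X, coeff_sum, coeff_monomial]

lemma exists_permExponent_of_mem_support_det (v : Fin t → Fin t → σ) {e : σ →₀ ℕ}
    (he : e ∈ (Matrix.of fun i j => (X (v i j) : MvPolynomial σ R)).det.support) :
    ∃ τ, permExponent v τ = e := by
  classical
  rw [mem_support_iff, coeff_det_of_X] at he
  obtain ⟨τ, -, hτ⟩ := exists_ne_zero_of_sum_ne_zero he
  exact ⟨τ, by_contra fun h => hτ (if_neg h)⟩

lemma coeff_permExponent_one_det [Nontrivial R] (v : Fin t → Fin t → σ)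
    (hv : ∀ τ, permExponent v τ = permExponent v 1 ↔ τ = 1) :
    coeff (permExponent v 1) (Matrix.of fun i j => (X (v i j) : MvPolynomial σ R)).det = 1 := by
  classical
  rw [coeff_det_of_X, sum_eq_single 1 (fun τ _ h => if_neg ((hv τ).not.2 h)) (by simp)]
  simp

end Determinant

section AvoidingMonomials

variable {σ R : Type*} [CommRing R]

def avoidingMonomialIdeal (t : ℕ) (a : σ) : Ideal (MvPolynomial σ R) :=
  Ideal.span ((fun e => monomial e 1) '' {e | e.degree = t ∧ e a = 0})

lemma mem_avoidingMonomialIdeal {t : ℕ} {a : σ} {p : MvPolynomial σ R}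
    (hp : ∀ e ∈ p.support, e.degree = t ∧ e a = 0) : p ∈ avoidingMonomialIdeal t a :=
  mem_ideal_span_monomial_image.2 fun e he => ⟨e, hp e he, le_rfl⟩

lemma apply_eq_zero_of_mem_avoidingMonomialIdeal {t : ℕ} {a : σ} {p : MvPolynomial σ R}
    (hp : p ∈ avoidingMonomialIdeal t a) {e : σ →₀ ℕ} (he : e ∈ p.support)
    (hdeg : e.degree = t) : e a = 0 := by
  obtain ⟨e', ⟨hdeg', ha'⟩, hle⟩ := mem_ideal_span_monomial_image.1 hp e he
  obtain ⟨d, rfl⟩ := le_iff_exists_add.1 hle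
  have hd : d = 0 := by
    rw [map_add, hdeg'] at hdeg
    exact (Finsupp.degree_eq_zero_iff d).1 (by omega)
  simpa [hd] using ha'

lemma minorsIdeal_le_avoidingMonomialIdeal {p q : ℕ} (v : Fin p → Fin q → σ) (t : ℕ)
    {a : σ} (ha : ∀ i j, v i j ≠ a) :
    minorsIdeal (Matrix.of fun i j => (X (v i j) : MvPolynomial σ R)) t ≤
      avoidingMonomialIdeal t a := by
  classical
  refine Ideal.span_le.2 ?_
  rintro _ ⟨ri, ci, -, -, rfl⟩
  refine mem_avoidingMonomialIdeal fun e he => ?_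
  obtain ⟨τ, rfl⟩ := exists_permExponent_of_mem_support_det (fun i j => v (ri i) (ci j)) he
  exact ⟨degree_permExponent _ τ, (permExponent_apply_eq_zero_iff _ τ a).2 fun i => ha _ _⟩

end AvoidingMonomials

def catIndex (m r : ℕ) (i : Fin m) (j : Fin (m - 1)) : Fin ((m - 1) * (r + 1)) :=
  ⟨i * r + j, by
    have := Nat.mul_le_mul_right r (Nat.le_sub_one_of_lt i.isLt)
    rw [Nat.mul_succ]; omega⟩

lemma catMatrix_eq_of_X (k : Type*) [CommSemiring k] (m r : ℕ) :
    catMatrix k m r = Matrix.of fun i j => X (catIndex m r i j) := rfl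

end CatalecticantMinor

open CatalecticantMinor in
theorem catalecticant_corner_minor_not_in_column_submatrix_minors
    (k : Type*) [Field k] (m r t : ℕ)
    (hr1 : 1 ≤ r) (ht1 : 2 ≤ t) (ht2 : t ≤ m - 2) :
    ((catMatrix k m r).submatrix
        (fun i : Fin t => (⟨m - t + i.1, by omega⟩ : Fin m))
        (fun j : Fin t => (⟨(m - 1) - t + j.1, by omega⟩ : Fin (m - 1)))).det ∉
      minorsIdeal
        ((catMatrix k m r).submatrix id
          (fun j : Fin t => (⟨j.1, by omega⟩ : Fin (m - 1)))) t := by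
  intro hΔ
  rw [catMatrix_eq_of_X] at hΔ
  have hN : (m - 1) * r + (m - 2) < (m - 1) * (r + 1) := by rw [Nat.mul_succ]; omega
  let N : Fin ((m - 1) * (r + 1)) := ⟨_, hN⟩
  let v (a b : Fin t) : Fin ((m - 1) * (r + 1)) :=
    catIndex m r ⟨m - t + a, by omega⟩ ⟨m - 1 - t + b, by omega⟩
  let Δ : MvPolynomial _ k := (Matrix.of fun a b => X (v a b)).det
  have hcolumns (i : Fin m) (j : Fin t) : catIndex m r i ⟨j, by omega⟩ ≠ N := by
    intro h
    have := Nat.mul_le_mul_right r (Nat.le_sub_one_of_lt i.isLt)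
    have := congrArg Fin.val h
    simp only [catIndex, N] at this
    omega
  have hΔ' : Δ ∈ avoidingMonomialIdeal t N :=
    minorsIdeal_le_avoidingMonomialIdeal
      (fun i (j : Fin t) => catIndex m r i ⟨j, by omega⟩) t hcolumns hΔ
  have hcoeff : coeff (permExponent v 1) Δ = 1 :=
    coeff_permExponent_one_det v <|
      permExponent_eq_permExponent_one_iff Fin.val ((m - t) * r + (m - 1 - t)) r hr1 v
        fun a b => by simp only [v, catIndex]; ring
  have hcorner : permExponent v 1 N ≠ 0 := by
    rw [Ne, permExponent_apply_eq_zero_iff, not_forall_not]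
    refine ⟨⟨t - 1, by omega⟩, Fin.ext ?_⟩
    simp only [v, catIndex, N, Equiv.Perm.one_apply]
    rw [show m - t + (t - 1) = m - 1 by omega]
    omega
  exact hcorner <| apply_eq_zero_of_mem_avoidingMonomialIdeal hΔ'
    (by rw [mem_support_iff, hcoeff]; exact one_ne_zero) (degree_permExponent v 1)
end
end
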